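/- Let E be a real inner product space with inner product ⟨·,·⟩_H, let y_1, …, y_M ∈ E be a finite family of snapshots, and let φ_1, …, φ_d ∈ E be POD modes for this family: the φ_i are orthonormal with respect to ⟨·,·⟩_H, every snapshot y_n lies in span{φ_1, …, φ_d}, and there exist nonnegative reals λ_1, …, λ_d such that (1/M) Σ_{n=1}^M ⟨y_n, φ_i⟩_H ⟨y_n, φ_j⟩_H = λ_i δ_{ij} for all 1 ≤ i, j ≤ d. Let ⟨·,·⟩_W be a second inner product on E with associated norm ‖·‖_W, fix 0 ≤ r ≤ d, and let R_r : E → E be any linear projection onto X^r = span{φ_1, …, φ_r} (i.e., R_r is linear, its range is contained in X^r, and R_r v = v for all v ∈ X^r). Then (1/M) Σ_{n=1}^M ‖y_n − R_r y_n‖_W² = Σ_{i=r+1}^d λ_i ‖φ_i − R_r φ_i‖_W². -/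

import Mathlib

open scoped InnerProductSpace

/-!
Expand each snapshot in the POD basis, `y = ∑ i, ⟪y, φ i⟫ φ i`. Since `R` fixes `φ i` for `i < r`,
`y - R y = ∑_{i ≥ r} ⟪y, φ i⟫ (φ i - R φ i)`, so by bilinearity the mean `W`-energy of the errors is
`∑_{i,j ≥ r} C i j ⟪φ i - R φ i, φ j - R φ j⟫_W` with `C` the snapshot correlation matrix in the
POD basis. That matrix is `diag λ`, which leaves only the diagonal terms.
-/

def LinearMap.BilinForm.ofSymm {𝕜 E : Type*} [CommSemiring 𝕜] [AddCommMonoid E] [Module 𝕜 E]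
    (f : E → E → 𝕜) (hsymm : ∀ u v, f u v = f v u)
    (hadd : ∀ u v w, f (u + v) w = f u w + f v w) (hsmul : ∀ (c : 𝕜) u v, f (c • u) v = c * f u v) :
    LinearMap.BilinForm 𝕜 E :=
  LinearMap.mk₂ 𝕜 f hadd hsmul
    (fun u v w => by rw [hsymm, hadd, hsymm v, hsymm w])
    (fun c u v => by rw [hsymm, hsmul, hsymm, smul_eq_mul])

theorem Orthonormal.sum_inner_smul_eq_of_mem_span {𝕜 E ι : Type*} [RCLike 𝕜]
    [NormedAddCommGroup E] [InnerProductSpace 𝕜 E] [Fintype ι] {v : ι → E}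
    (hv : Orthonormal 𝕜 v) {x : E} (hx : x ∈ Submodule.span 𝕜 (Set.range v)) :
    ∑ i, ⟪v i, x⟫_𝕜 • v i = x := by
  obtain ⟨a, rfl⟩ := (Submodule.mem_span_range_iff_exists_fun 𝕜).mp hx
  simp only [hv.inner_right_fintype]

theorem LinearMap.sub_apply_sum_smul {𝕜 E ι : Type*} [CommRing 𝕜] [AddCommGroup E] [Module 𝕜 E]
    (R : E →ₗ[𝕜] E) (s : Finset ι) (c : ι → 𝕜) (v : ι → E) :
    ∑ i ∈ s, c i • v i - R (∑ i ∈ s, c i • v i) = ∑ i ∈ s, c i • (v i - R (v i)) := by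
  simp only [map_sum, map_smul, smul_sub, Finset.sum_sub_distrib]

theorem LinearMap.BilinForm.apply_sum_smul_sum_smul {𝕜 E ι : Type*} [CommRing 𝕜]
    [AddCommGroup E] [Module 𝕜 E] (B : LinearMap.BilinForm 𝕜 E) (s : Finset ι) (a b : ι → 𝕜)
    (ψ : ι → E) :
    B (∑ i ∈ s, a i • ψ i) (∑ j ∈ s, b j • ψ j) = ∑ i ∈ s, ∑ j ∈ s, a i * b j * B (ψ i) (ψ j) := by
  simp only [map_sum, map_smul, LinearMap.sum_apply, LinearMap.smul_apply, smul_eq_mul,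
    Finset.mul_sum]
  rw [Finset.sum_comm]
  exact Finset.sum_congr rfl fun i _ => Finset.sum_congr rfl fun j _ => by ring

theorem LinearMap.BilinForm.mul_sum_apply_sum_smul_of_correlation_eq_diag {𝕜 E ι κ : Type*}
    [CommRing 𝕜] [AddCommGroup E] [Module 𝕜 E] [Fintype κ] [DecidableEq ι]
    (B : LinearMap.BilinForm 𝕜 E) (s : Finset ι) (w : 𝕜) (c : κ → ι → 𝕜) (ψ : ι → E)
    (lam : ι → 𝕜) (hcorr : ∀ i ∈ s, ∀ j ∈ s, w * ∑ n, c n i * c n j = if i = j then lam i else 0) :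
    w * ∑ n, B (∑ i ∈ s, c n i • ψ i) (∑ i ∈ s, c n i • ψ i) = ∑ i ∈ s, lam i * B (ψ i) (ψ i) :=
  calc w * ∑ n, B (∑ i ∈ s, c n i • ψ i) (∑ i ∈ s, c n i • ψ i)
      = ∑ i ∈ s, ∑ j ∈ s, (w * ∑ n, c n i * c n j) * B (ψ i) (ψ j) := by
        simp only [apply_sum_smul_sum_smul, Finset.mul_sum, Finset.sum_mul]
        rw [Finset.sum_comm]
        refine Finset.sum_congr rfl fun i _ => ?_
        rw [Finset.sum_comm]
        exact Finset.sum_congr rfl fun j _ => Finset.sum_congr rfl fun n _ => by ring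
    _ = ∑ i ∈ s, lam i * B (ψ i) (ψ i) := by
        refine Finset.sum_congr rfl fun i hi => ?_
        simp +contextual only [hcorr i hi, ite_mul, zero_mul, Finset.sum_ite_eq, hi, if_true]

theorem pod_projection_error_W_norm_general_projection_general
    {E : Type*} [NormedAddCommGroup E] [InnerProductSpace ℝ E]
    (M d : ℕ)
    (y : Fin M → E) (φ : Fin d → E) (lam : Fin d → ℝ)
    (hortho : Orthonormal ℝ φ)
    (hspan : ∀ n, y n ∈ Submodule.span ℝ (Set.range φ))
    (hcorr : ∀ i j : Fin d,
      (1 / (M : ℝ)) * ∑ n, ⟪y n, φ i⟫_ℝ * ⟪y n, φ j⟫_ℝ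
        = if i = j then lam i else 0)
    (innerW : E → E → ℝ)
    (hW_symm : ∀ u v, innerW u v = innerW v u)
    (hW_add : ∀ u v w, innerW (u + v) w = innerW u w + innerW v w)
    (hW_smul : ∀ (c : ℝ) (u v : E), innerW (c • u) v = c * innerW u v)
    (r : ℕ)
    (R : E →ₗ[ℝ] E)
    (hR_proj : ∀ v ∈ Submodule.span ℝ (φ '' {i : Fin d | (i : ℕ) < r}), R v = v) :
    (1 / (M : ℝ)) * ∑ n, innerW (y n - R (y n)) (y n - R (y n))
      = ∑ i ∈ Finset.univ.filter (fun i : Fin d => r ≤ (i : ℕ)),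
          lam i * innerW (φ i - R (φ i)) (φ i - R (φ i)) := by
  let B := LinearMap.BilinForm.ofSymm innerW hW_symm hW_add hW_smul
  have hexpand : ∀ n, ∑ i, ⟪y n, φ i⟫_ℝ • φ i = y n := fun n => by
    simpa only [real_inner_comm] using hortho.sum_inner_smul_eq_of_mem_span (hspan n)
  have hfixed : ∀ i : Fin d, (i : ℕ) < r → φ i - R (φ i) = 0 := fun i hi => by
    rw [hR_proj _ (Submodule.subset_span ⟨i, hi, rfl⟩), sub_self]
  calc (1 / (M : ℝ)) * ∑ n, innerW (y n - R (y n)) (y n - R (y n))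
      = (1 / (M : ℝ)) * ∑ n, B (∑ i, ⟪y n, φ i⟫_ℝ • (φ i - R (φ i)))
          (∑ i, ⟪y n, φ i⟫_ℝ • (φ i - R (φ i))) := by
        simp only [← R.sub_apply_sum_smul, hexpand]; rfl
    _ = ∑ i, lam i * B (φ i - R (φ i)) (φ i - R (φ i)) :=
        B.mul_sum_apply_sum_smul_of_correlation_eq_diag _ _ _ _ _ fun i _ j _ => hcorr i j
    _ = _ := by
        refine (Finset.sum_filter_of_ne fun i _ hne => ?_).symm
        by_contra hlt
        exact hne (by rw [hfixed i (not_le.mp hlt), map_zero, mul_zero])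

/-- Identity (2.1b) of Lemma 2.1: the mean-square error of an arbitrary linear
projection `R` onto the span of the first `r` POD modes, measured in a second
inner product `W`, equals the tail sum of POD eigenvalues weighted by
`‖φ i − R (φ i)‖_W²`. -/
theorem pod_projection_error_W_norm_general_projection
    {E : Type*} [NormedAddCommGroup E] [InnerProductSpace ℝ E]
    (M d : ℕ) (hM : 0 < M)
    (y : Fin M → E) (φ : Fin d → E) (lam : Fin d → ℝ)
    (hortho : Orthonormal ℝ φ)
    (hspan : ∀ n, y n ∈ Submodule.span ℝ (Set.range φ))
    (hlam_nonneg : ∀ i, 0 ≤ lam i)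
    (hcorr : ∀ i j : Fin d,
      (1 / (M : ℝ)) * ∑ n, ⟪y n, φ i⟫_ℝ * ⟪y n, φ j⟫_ℝ
        = if i = j then lam i else 0)
    (innerW : E → E → ℝ)
    (hW_symm : ∀ u v, innerW u v = innerW v u)
    (hW_add : ∀ u v w, innerW (u + v) w = innerW u w + innerW v w)
    (hW_smul : ∀ (c : ℝ) (u v : E), innerW (c • u) v = c * innerW u v)
    (hW_pos : ∀ u : E, u ≠ 0 → 0 < innerW u u)
    (r : ℕ) (hr : r ≤ d)
    (R : E →ₗ[ℝ] E)
    (hR_range : ∀ v, R v ∈ Submodule.span ℝ (φ '' {i : Fin d | (i : ℕ) < r}))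
    (hR_proj : ∀ v ∈ Submodule.span ℝ (φ '' {i : Fin d | (i : ℕ) < r}), R v = v) :
    (1 / (M : ℝ)) * ∑ n, innerW (y n - R (y n)) (y n - R (y n))
      = ∑ i ∈ Finset.univ.filter (fun i : Fin d => r ≤ (i : ℕ)),
          lam i * innerW (φ i - R (φ i)) (φ i - R (φ i)) :=
  pod_projection_error_W_norm_general_projection_general M d y φ lam hortho hspan hcorr innerW
    hW_symm hW_add hW_smul r R hR_proj
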